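/- arXiv:0806.3010 — 7 statements merged into one kernel-verified Lean document; each statement's English description precedes it below -/
import Mathlib

section
/- The symmetric bilinear form on ℤ² given by the matrix [[-2n - m n², 1], [1, -1]] is not isomorphic (as a bilinear form over ℤ) to the form given by [[-2n - m n², -1 - m n], [-1 - m n, -1 - m]], for any integers m ≥ 1 and n ≥ 2. -/
/-
Since `e₂ᵀ A e₂ = -1` for the first matrix `A`, an isometry would make the second form represent
`-1`, i.e. `Q(x, y) = a x² + 2 b x y + c y² = 1` with `a = 2n + mn²`, `b = 1 + mn`, `c = 1 + m`.
Here `ac - b² = a - 1`, so `a Q = (ax + by)² + (a - 1) y²` forces `y² ≤ 1`. For `y = 0` this says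
`a x² = 1`; for `y = ±1` it says `ax + by = ±1`, so `a` divides `b - 1` or `b + 1`, which is
impossible because `0 < b - 1 < b + 1 < a`.
-/

open Matrix

theorem Matrix.exists_dotProduct_mulVec_eq_of_transpose_mul_mul_eq {R ι : Type*} [CommRing R]
    [Fintype ι] [DecidableEq ι] {A B P : Matrix ι ι R} (hP : IsUnit P.det) (h : Pᵀ * A * P = B)
    (w : ι → R) : ∃ v, v ⬝ᵥ (B *ᵥ v) = w ⬝ᵥ (A *ᵥ w) := by
  refine ⟨P⁻¹ *ᵥ w, ?_⟩
  have hw : P *ᵥ (P⁻¹ *ᵥ w) = w := by rw [mulVec_mulVec, mul_nonsing_inv P hP, one_mulVec]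
  rw [← h, ← mulVec_mulVec, ← mulVec_mulVec, hw, dotProduct_mulVec, vecMul_transpose, hw]

theorem Int.binaryForm_ne_one_of_det_eq_sub_one {a b c : ℤ} (hdet : a * c - b ^ 2 = a - 1)
    (hb : 1 < b) (hba : b + 1 < a) (x y : ℤ) : a * x ^ 2 + 2 * b * x * y + c * y ^ 2 ≠ 1 := by
  intro hQ
  have hsq : (a * x + b * y) ^ 2 + (a - 1) * y ^ 2 = a := by
    linear_combination a * hQ - y ^ 2 * hdet
  have hy : y ^ 2 ≤ 1 := by nlinarith [sq_nonneg (a * x + b * y)]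
  obtain hy0 | hy1 : y = 0 ∨ y ^ 2 = 1 := by
    rw [← pow_eq_zero_iff two_ne_zero]
    have := sq_nonneg y
    omega
  · subst hy0
    have ha : a = 1 :=
      Int.eq_one_of_mul_eq_one_right (b := x ^ 2) (by omega) (by linear_combination hQ)
    omega
  · have hdvd : a ∣ (a * x + b * y) * y - b := ⟨x * y, by linear_combination b * hy1⟩
    have hzy : ((a * x + b * y) * y) ^ 2 = 1 := by
      rw [mul_pow, hy1, mul_one]
      linear_combination hsq - (a - 1) * hy1
    rcases sq_eq_one_iff.1 hzy with hz | hz <;> rw [hz] at hdvd <;>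
      exact absurd (Int.eq_zero_of_abs_lt_dvd hdvd (by rw [abs_of_neg (by omega)]; omega))
        (by omega)

theorem stmt_0 (m n : ℤ) (hm : 1 ≤ m) (hn : 2 ≤ n) :
    ¬ ∃ P : Matrix (Fin 2) (Fin 2) ℤ, IsUnit P.det ∧
      Pᵀ * !![-2*n - m*n^2, 1; 1, -1] * P =
        !![-2*n - m*n^2, -1 - m*n; -1 - m*n, -1 - m] := by
  rintro ⟨P, hP, h⟩
  obtain ⟨v, hv⟩ := exists_dotProduct_mulVec_eq_of_transpose_mul_mul_eq hP h ![0, 1]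
  have hmn : 0 ≤ m * n * (n - 1) := mul_nonneg (mul_nonneg (by omega) (by omega)) (by omega)
  refine Int.binaryForm_ne_one_of_det_eq_sub_one (a := 2*n + m*n^2) (b := 1 + m*n) (c := 1 + m)
    (by ring) (by nlinarith) (by nlinarith) (v 0) (v 1) ?_
  simp only [dotProduct, mulVec, of_apply, cons_val', cons_val_fin_one, Fin.sum_univ_two,
    cons_val_zero, cons_val_one, mul_zero, mul_one, zero_add] at hv
  linear_combination -hv
end

section
/- For integers m ≥ 1 and n ≥ 2, the symmetric bilinear form on ℤ² given by the matrix [[-2n - m n², -1 - m n], [-1 - m n, -1 - m]] contains no element of self-intersection -1; that is, there is no vector v = (x, y) ∈ ℤ² with vᵀ A v = -1, where A = [[-2n - m n², -1 - m n], [-1 - m n, -1 - m]]. -/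
/-! Completing squares, `-vᵀAv = m (n x + y)² + (2n - 1) x² + (x + y)²` for `v = (x, y)`.
If `x ≠ 0` the middle term alone is at least `3`; if `x = 0` the sum is `(m + 1) y²`, which is `0` or
at least `2`. So the value `1` is never attained. -/

open Matrix

theorem dotProduct_mulVec_of_fin_two {R : Type*} [CommRing R] (a b c : R) (v : Fin 2 → R) :
    v ⬝ᵥ !![a, b; b, c] *ᵥ v = a * v 0 ^ 2 + 2 * b * v 0 * v 1 + c * v 1 ^ 2 := by
  simp only [dotProduct, mulVec, Fin.sum_univ_two, cons_val', cons_val_zero, cons_val_one,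
    empty_val', cons_val_fin_one, of_apply]
  ring

theorem weighted_sq_sum_ne_one {m n : ℤ} (hm : 1 ≤ m) (hn : 2 ≤ n) (x y : ℤ) :
    m * (n * x + y) ^ 2 + (2 * n - 1) * x ^ 2 + (x + y) ^ 2 ≠ 1 := by
  have hm0 : 0 ≤ m * (n * x + y) ^ 2 := by positivity
  rcases eq_or_ne x 0 with rfl | hx
  · rcases eq_or_ne y 0 with rfl | hy
    · norm_num
    · have hy2 : 0 < y ^ 2 := by positivity
      nlinarith
  · have hx2 : 0 < x ^ 2 := by positivity
    nlinarith [sq_nonneg (x + y)]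

theorem stmt_1 (m n : ℤ) (hm : 1 ≤ m) (hn : 2 ≤ n) :
    ¬ ∃ v : Fin 2 → ℤ,
      v ⬝ᵥ (!![-2*n - m*n^2, -1 - m*n; -1 - m*n, -1 - m]).mulVec v = -1 := by
  rintro ⟨v, hv⟩
  rw [dotProduct_mulVec_of_fin_two] at hv
  exact weighted_sq_sum_ne_one hm hn (v 0) (v 1) (by linear_combination -hv)
end

section
/- For all integers m ≥ 1 and n ≥ 1, the symmetric bilinear form on ℤ³ given by the matrix [[-1, 0, 0], [0, -m, 1], [0, 1, 0]] is isomorphic over ℤ to the diagonal form ⟨1⟩ ⊕ ⟨-1⟩ ⊕ ⟨-1⟩. -/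
/-! Write `A m` for the Gram matrix `⟨-1⟩ ⊕ [[-m, 1], [1, 0]]`. Replacing the basis vector `e₂`
by `e₂ + k e₃` turns `A (m + 2k)` into `A m`, so only the parity of `m` matters. For `m = 0` and
`m = 1` an explicit unimodular change of basis diagonalizes `A m` to `⟨1⟩ ⊕ ⟨-1⟩ ⊕ ⟨-1⟩`. -/

open Matrix

namespace Matrix

variable {ι R : Type*} [Fintype ι] [DecidableEq ι] [CommRing R]

def IsCongruent (A B : Matrix ι ι R) : Prop :=
  ∃ P : Matrix ι ι R, IsUnit P.det ∧ Pᵀ * A * P = B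

theorem IsCongruent.trans {A B C : Matrix ι ι R} (hAB : A.IsCongruent B) (hBC : B.IsCongruent C) :
    A.IsCongruent C := by
  obtain ⟨P, hP, rfl⟩ := hAB
  obtain ⟨Q, hQ, rfl⟩ := hBC
  refine ⟨P * Q, by simpa only [det_mul] using hP.mul hQ, ?_⟩
  simp only [transpose_mul, Matrix.mul_assoc]

end Matrix

def hyperbolicSumMatrix (m : ℤ) : Matrix (Fin 3) (Fin 3) ℤ :=
  !![-1, 0, 0; 0, -m, 1; 0, 1, 0]

theorem hyperbolicSumMatrix_add_two_mul_isCongruent (m k : ℤ) :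
    (hyperbolicSumMatrix (m + 2 * k)).IsCongruent (hyperbolicSumMatrix m) := by
  refine ⟨!![1, 0, 0; 0, 1, 0; 0, k, 1], by simp [det_fin_three], ?_⟩
  ext i j
  fin_cases i <;> fin_cases j <;> simp [hyperbolicSumMatrix, mul_apply, Fin.sum_univ_succ]; ring

theorem hyperbolicSumMatrix_zero_isCongruent :
    (hyperbolicSumMatrix 0).IsCongruent !![1, 0, 0; 0, -1, 0; 0, 0, -1] :=
  ⟨!![1, 1, 1; 1, 1, 0; 1, 0, 1], by simp [det_fin_three], by
    ext i j
    fin_cases i <;> fin_cases j <;> simp [hyperbolicSumMatrix, mul_apply, Fin.sum_univ_succ]⟩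

theorem hyperbolicSumMatrix_one_isCongruent :
    (hyperbolicSumMatrix 1).IsCongruent !![1, 0, 0; 0, -1, 0; 0, 0, -1] :=
  ⟨!![0, 1, 0; 1, 0, 1; 1, 0, 0], by simp [det_fin_three], by
    ext i j
    fin_cases i <;> fin_cases j <;> simp [hyperbolicSumMatrix, mul_apply, Fin.sum_univ_succ]⟩

theorem stmt_4_general (m : ℤ) :
    ∃ P : Matrix (Fin 3) (Fin 3) ℤ, IsUnit P.det ∧
      Pᵀ * !![(-1 : ℤ), 0, 0; 0, -m, 1; 0, 1, 0] * P =
        !![(1 : ℤ), 0, 0; 0, -1, 0; 0, 0, -1] := by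
  have hreduce := hyperbolicSumMatrix_add_two_mul_isCongruent (m % 2) (m / 2)
  rw [Int.emod_add_mul_ediv] at hreduce
  refine hreduce.trans ?_
  rcases Int.emod_two_eq_zero_or_one m with h | h <;> rw [h]
  · exact hyperbolicSumMatrix_zero_isCongruent
  · exact hyperbolicSumMatrix_one_isCongruent

theorem stmt_4 (m n : ℤ) (hm : 1 ≤ m) (hn : 1 ≤ n) :
    ∃ P : Matrix (Fin 3) (Fin 3) ℤ, IsUnit P.det ∧
      Pᵀ * !![(-1 : ℤ), 0, 0; 0, -m, 1; 0, 1, 0] * P =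
        !![(1 : ℤ), 0, 0; 0, -1, 0; 0, 0, -1] :=
  stmt_4_general m
end

section
/- For all integers m ≥ 1 and n ≥ 2, the symmetric bilinear form on ℤ³ given by the matrix [[-2n - n²m, 1, 1], [1, 0, 0], [1, 0, -1]] is isomorphic over ℤ to the diagonal form ⟨1⟩ ⊕ ⟨-1⟩ ⊕ ⟨-1⟩. -/
/-!
The columns of the matrix `P` below form a basis of `ℤ³` (as `det P = -1`) that is orthogonal
for the form, with norms `1, -1, -1`. Its entries involve the triangular number
`k = m(m + 1)/2`, which is where integrality of `P` comes from.
-/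

open Matrix

section

variable {R : Type*} [CommRing R]

def diagonalizingMatrix (m n k : R) : Matrix (Fin 3) (Fin 3) R :=
  !![1, 1, 0; n + n^2*k, n + n^2*k - 1, n*m; n*m+1, n*m+1, 1]

theorem det_diagonalizingMatrix (m n k : R) : (diagonalizingMatrix m n k).det = -1 := by
  simp only [diagonalizingMatrix, det_fin_three, of_apply, cons_val, cons_val', cons_val_zero,
    cons_val_one, cons_val_fin_one]
  ring

theorem transpose_diagonalizingMatrix_mul_mul {m n k : R} (hk : m * (m + 1) = 2 * k) :
    (diagonalizingMatrix m n k)ᵀ * !![-2*n - n^2*m, 1, 1; 1, 0, 0; 1, 0, -1] *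
        diagonalizingMatrix m n k =
      !![1, 0, 0; 0, -1, 0; 0, 0, -1] := by
  ext i j
  fin_cases i <;> fin_cases j <;>
    simp only [diagonalizingMatrix, mul_apply, transpose_apply, of_apply, Fin.sum_univ_three,
      Fin.isValue, Fin.mk_one, Fin.reduceFinMk, Fin.zero_eta, cons_val, cons_val', cons_val_zero,
      cons_val_one, cons_val_fin_one] <;>
    first | ring1 | linear_combination (-n ^ 2) * hk

end

theorem stmt_5_general (m n : ℤ) :
    ∃ P : Matrix (Fin 3) (Fin 3) ℤ, IsUnit P.det ∧
      Pᵀ * !![-2*n - n^2*m, 1, 1; 1, 0, 0; 1, 0, -1] * P =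
        !![(1 : ℤ), 0, 0; 0, -1, 0; 0, 0, -1] := by
  obtain ⟨k, hk⟩ : ∃ k, m * (m + 1) = 2 * k := by
    obtain ⟨k, hk⟩ := Int.even_mul_succ_self m
    exact ⟨k, by rw [hk, two_mul]⟩
  refine ⟨diagonalizingMatrix m n k, ?_, transpose_diagonalizingMatrix_mul_mul hk⟩
  rw [det_diagonalizingMatrix]
  exact isUnit_one.neg

theorem stmt_5 (m n : ℤ) (hm : 1 ≤ m) (hn : 2 ≤ n) :
    ∃ P : Matrix (Fin 3) (Fin 3) ℤ, IsUnit P.det ∧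
      Pᵀ * !![-2*n - n^2*m, 1, 1; 1, 0, 0; 1, 0, -1] * P =
        !![(1 : ℤ), 0, 0; 0, -1, 0; 0, 0, -1] :=
  stmt_5_general m n
end

section
/- For integers m ≥ 1 and n ≥ 2, the form given by the matrix [[-2n - m n², 1], [1, -1]] is indefinite if and only if m n² + 2n - 1 < 0, hence (given m ≥ 1, n ≥ 2) it is negative definite; nevertheless it represents -1 while the form [[-2n - m n², -1 - m n], [-1 - m n, -1 - m]] does not, so the two negative definite forms of equal rank and determinant are non-isomorphic. -/
/-!
Both forms have determinant `D = m n² + 2n - 1`. Completing the square,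
`-Q₁(x, y) = (y - x)² + D x²` and `-(1 + m) Q₂(x, y) = ((1 + m) y + (1 + m n) x)² + D x²`.
The first identity settles definiteness, and `Q₁(0, 1) = -1`. If `Q₂(x, y) = -1`, the second
forces `D x² ≤ 1 + m`; since `D > 1 + m` for `n ≥ 2`, `x = 0` and then `(1 + m) y² = 1`,
impossible for `m ≥ 1`. Isomorphic forms represent the same integers, so the forms differ.
-/

open Matrix

theorem dotProduct_mulVec_self_fin_two {R : Type*} [CommRing R] (a b c d : R) (v : Fin 2 → R) :
    v ⬝ᵥ !![a, b; c, d] *ᵥ v = a * v 0 ^ 2 + (b + c) * (v 0 * v 1) + d * v 1 ^ 2 := by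
  simp only [mulVec, dotProduct, Fin.sum_univ_two, of_apply, cons_val', cons_val_zero,
    cons_val_one, empty_val', cons_val_fin_one]
  ring

theorem dotProduct_mulVec_self_transpose_mul_mul {n R : Type*} [Fintype n] [CommSemiring R]
    (A P : Matrix n n R) (v : n → R) :
    v ⬝ᵥ (Pᵀ * A * P) *ᵥ v = (P *ᵥ v) ⬝ᵥ A *ᵥ (P *ᵥ v) := by
  rw [← mulVec_mulVec, ← mulVec_mulVec, dotProduct_mulVec, vecMul_transpose]

theorem exists_dotProduct_mulVec_self_eq_of_transpose_mul_mul {n R : Type*} [Fintype n]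
    [DecidableEq n] [CommRing R] {A B P : Matrix n n R} (hP : IsUnit P.det)
    (hB : Pᵀ * A * P = B) {k : R} (hA : ∃ w, w ⬝ᵥ A *ᵥ w = k) : ∃ v, v ⬝ᵥ B *ᵥ v = k := by
  obtain ⟨w, hw⟩ := hA
  refine ⟨P⁻¹ *ᵥ w, ?_⟩
  rw [← hB, dotProduct_mulVec_self_transpose_mul_mul, mulVec_mulVec, mul_nonsing_inv P hP,
    one_mulVec, hw]

section
variable (a : ℤ)

theorem dotProduct_mulVec_self_eq_sub_sq (v : Fin 2 → ℤ) :
    v ⬝ᵥ !![a, 1; 1, -1] *ᵥ v = (a + 1) * v 0 ^ 2 - (v 1 - v 0) ^ 2 := by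
  rw [dotProduct_mulVec_self_fin_two]
  ring

theorem exists_dotProduct_mulVec_self_eq_neg_one :
    ∃ v : Fin 2 → ℤ, v ⬝ᵥ !![a, 1; 1, -1] *ᵥ v = -1 :=
  ⟨![0, 1], by rw [dotProduct_mulVec_self_eq_sub_sq]; simp⟩

theorem exists_pos_dotProduct_mulVec_self_iff :
    (∃ v : Fin 2 → ℤ, 0 < v ⬝ᵥ !![a, 1; 1, -1] *ᵥ v) ↔ 0 < a + 1 := by
  simp only [dotProduct_mulVec_self_eq_sub_sq]
  constructor
  · rintro ⟨v, hv⟩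
    by_contra! h
    nlinarith [sq_nonneg (v 0), sq_nonneg (v 1 - v 0)]
  · intro h
    exact ⟨![1, 1], by simpa using h⟩

theorem dotProduct_mulVec_self_neg_of_ne_zero (ha : a + 1 < 0) {v : Fin 2 → ℤ} (hv : v ≠ 0) :
    v ⬝ᵥ !![a, 1; 1, -1] *ᵥ v < 0 := by
  rw [dotProduct_mulVec_self_eq_sub_sq]
  by_cases h0 : v 0 = 0
  · have h1 : v 1 ≠ 0 := fun h1 => hv (by ext i; fin_cases i <;> assumption)
    rw [h0]
    nlinarith [pow_pos (abs_pos.2 h1) 2, sq_abs (v 1)]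
  · nlinarith [pow_pos (abs_pos.2 h0) 2, sq_abs (v 0), sq_nonneg (v 1 - v 0)]

end

section
variable (m n : ℤ)

theorem neg_mul_dotProduct_mulVec_self_eq_sq_add (v : Fin 2 → ℤ) :
    -(1 + m) * v ⬝ᵥ !![-2*n - m*n^2, -1 - m*n; -1 - m*n, -1 - m] *ᵥ v =
      ((1 + m) * v 1 + (1 + m*n) * v 0) ^ 2 + (m*n^2 + 2*n - 1) * v 0 ^ 2 := by
  rw [dotProduct_mulVec_self_fin_two]
  ring

theorem not_exists_dotProduct_mulVec_self_eq_neg_one (hm : 1 ≤ m) (hn : 2 ≤ n) :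
    ¬ ∃ v : Fin 2 → ℤ,
      v ⬝ᵥ !![-2*n - m*n^2, -1 - m*n; -1 - m*n, -1 - m] *ᵥ v = -1 := by
  rintro ⟨v, hv⟩
  have key := neg_mul_dotProduct_mulVec_self_eq_sq_add m n v
  rw [hv, mul_neg_one, neg_neg] at key
  have hD : m + 2 ≤ m*n^2 + 2*n - 1 := by
    nlinarith [mul_le_mul_of_nonneg_left (show 4 ≤ n^2 by nlinarith) (show 0 ≤ m by omega)]
  have hv0 : v 0 = 0 := by
    by_contra h0
    nlinarith [pow_pos (abs_pos.2 h0) 2, sq_abs (v 0),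
      sq_nonneg ((1 + m) * v 1 + (1 + m*n) * v 0)]
  rw [hv0] at key
  have hv1 : (1 + m) * v 1 ^ 2 = 1 := by
    have : (1 + m) * ((1 + m) * v 1 ^ 2) = (1 + m) * 1 := by linear_combination -key
    exact mul_left_cancel₀ (by omega) this
  have := Int.le_of_dvd one_pos ⟨_, hv1.symm⟩
  omega

end

theorem stmt_9 (m n : ℤ) (hm : 1 ≤ m) (hn : 2 ≤ n) :
    (((∃ v : Fin 2 → ℤ, 0 < v ⬝ᵥ (!![-2*n - m*n^2, 1; 1, -1]).mulVec v) ∧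
      (∃ v : Fin 2 → ℤ, v ⬝ᵥ (!![-2*n - m*n^2, 1; 1, -1]).mulVec v < 0)) ↔
        m*n^2 + 2*n - 1 < 0) ∧
    (∀ v : Fin 2 → ℤ, v ≠ 0 →
        v ⬝ᵥ (!![-2*n - m*n^2, 1; 1, -1]).mulVec v < 0) ∧
    (∃ v : Fin 2 → ℤ, v ⬝ᵥ (!![-2*n - m*n^2, 1; 1, -1]).mulVec v = -1) ∧
    (¬ ∃ v : Fin 2 → ℤ,
        v ⬝ᵥ (!![-2*n - m*n^2, -1 - m*n; -1 - m*n, -1 - m]).mulVec v = -1) ∧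
    (¬ ∃ P : Matrix (Fin 2) (Fin 2) ℤ, IsUnit P.det ∧
        Pᵀ * !![-2*n - m*n^2, 1; 1, -1] * P =
          !![-2*n - m*n^2, -1 - m*n; -1 - m*n, -1 - m]) := by
  have hrep := exists_dotProduct_mulVec_self_eq_neg_one (-2*n - m*n^2)
  have hnot := not_exists_dotProduct_mulVec_self_eq_neg_one m n hm hn
  have hneg : ∃ v : Fin 2 → ℤ, v ⬝ᵥ !![-2*n - m*n^2, 1; 1, -1] *ᵥ v < 0 :=
    let ⟨v, hv⟩ := hrep; ⟨v, by omega⟩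
  refine ⟨?_, fun v hv => dotProduct_mulVec_self_neg_of_ne_zero _ (by nlinarith) hv, hrep, hnot,
    fun ⟨P, hP, hPAB⟩ => hnot (exists_dotProduct_mulVec_self_eq_of_transpose_mul_mul hP hPAB hrep)⟩
  rw [exists_pos_dotProduct_mulVec_self_iff, and_iff_left hneg]
  constructor <;> intro h <;> linarith
end

section
/- For integers m ≥ 1, n ≥ 2 and all integers x, y, the quadratic form Q(x,y) = (-2n - m n²)x² + 2(-1 - m n)xy + (-1 - m)y² satisfies Q(x,y) ≤ -2 whenever (x,y) ≠ (0,0). -/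
/-!
Completing squares, `-Q(x, y) = (x + y)² + m (n x + y)² + (2n - 1) x²`. For `x ≠ 0` the last
term alone is at least `3`; for `x = 0` the right side is `(1 + m) y² ≥ 2`.
-/

lemma neg_quadForm_eq_sum_sq {R : Type*} [CommRing R] (m n x y : R) :
    -((-2*n - m*n^2) * x^2 + 2 * (-1 - m*n) * x * y + (-1 - m) * y^2) =
      (x + y)^2 + m * (n*x + y)^2 + (2*n - 1) * x^2 := by
  ring

lemma Int.one_le_sq_of_ne_zero {a : ℤ} (ha : a ≠ 0) : 1 ≤ a^2 :=
  (one_le_sq_iff_one_le_abs a).2 (Int.one_le_abs ha)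

theorem stmt_13 (m n : ℤ) (hm : 1 ≤ m) (hn : 2 ≤ n) (x y : ℤ)
    (hxy : (x, y) ≠ (0, 0)) :
    (-2*n - m*n^2) * x^2 + 2 * (-1 - m*n) * x * y + (-1 - m) * y^2 ≤ -2 := by
  suffices 2 ≤ (x + y)^2 + m * (n*x + y)^2 + (2*n - 1) * x^2 by
    linarith [neg_quadForm_eq_sum_sq m n x y]
  have hm_sq : 0 ≤ m * (n*x + y)^2 := by positivity
  rcases eq_or_ne x 0 with rfl | hx
  · have hy : 1 ≤ y^2 := Int.one_le_sq_of_ne_zero (by simpa using hxy)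
    nlinarith
  · have hx : 1 ≤ x^2 := Int.one_le_sq_of_ne_zero hx
    nlinarith [sq_nonneg (x + y)]
end

section
/- Suppose X and Y are negative definite integral lattices of rank 2 and ψ : X → Y is an isomorphism of lattices. If X contains a vector of norm -1 then so does Y. Consequently, for m ≥ 1, n ≥ 2, the lattices with Gram matrices [[-2n - m n², 1],[1, -1]] and [[-2n - m n², -1 - m n],[-1 - m n, -1 - m]] are not isomorphic, since the first contains a norm -1 vector and (by positivity of m(nx+y)² + (2n-1)x² + (x+y)² minus appropriate terms) the second does not. -/
/-!
A unimodular change of basis `P` carries a vector `v` of norm `c` for `Pᵀ * A * P` to the vector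
`P *ᵥ v` of norm `c` for `A`, and conversely via `P⁻¹`; so the set of norms represented is an
isomorphism invariant. The first lattice represents `-1` by `(0, 1)`. For the second, minus the
norm of `(x, y)` is `m (n x + y)² + (2 n - 1) x² + (x + y)²`, which is `0` at the origin and at
least `2` elsewhere: `(2 n - 1) x² ≥ 3` if `x ≠ 0`, and `(m + 1) y² ≥ 2` if `x = 0 ≠ y`.
-/

open Matrix

section Congruence

variable {ι R : Type*} [Fintype ι] [CommRing R]

theorem dotProduct_mulVec_transpose_mul_mul (A P : Matrix ι ι R) (v : ι → R) :
    v ⬝ᵥ (Pᵀ * A * P) *ᵥ v = (P *ᵥ v) ⬝ᵥ A *ᵥ (P *ᵥ v) := by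
  rw [← mulVec_mulVec, ← mulVec_mulVec, dotProduct_mulVec, vecMul_transpose]

theorem exists_dotProduct_mulVec_eq_of_congr [DecidableEq ι] {A B P : Matrix ι ι R} (hP : IsUnit P.det)
    (hPAB : Pᵀ * A * P = B) {v : ι → R} {c : R} (hv : v ⬝ᵥ A *ᵥ v = c) :
    ∃ w : ι → R, w ⬝ᵥ B *ᵥ w = c := by
  refine ⟨P⁻¹ *ᵥ v, ?_⟩
  rw [← hPAB, dotProduct_mulVec_transpose_mul_mul, mulVec_mulVec, mul_nonsing_inv _ hP,
    one_mulVec, hv]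

end Congruence

theorem dotProduct_mulVec_fin_two {R : Type*} [CommRing R] (a b c d : R) (v : Fin 2 → R) :
    v ⬝ᵥ !![a, b; c, d] *ᵥ v = a * v 0 ^ 2 + (b + c) * v 0 * v 1 + d * v 1 ^ 2 := by
  simp only [mulVec_fin_two, dotProduct, Fin.sum_univ_two, of_apply, cons_val', cons_val_zero,
    cons_val_one, empty_val', cons_val_fin_one]
  ring

theorem mul_sq_add_mul_sq_add_sq_ne_one {m k : ℤ} (hm : 1 ≤ m) (hk : 2 ≤ k) (n x y : ℤ) :
    m * (n * x + y) ^ 2 + k * x ^ 2 + (x + y) ^ 2 ≠ 1 := by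
  have hmy : 0 ≤ m * (n * x + y) ^ 2 := by positivity
  rcases eq_or_ne x 0 with rfl | hx
  · rcases eq_or_ne y 0 with rfl | hy
    · simp
    · have : 1 ≤ y ^ 2 := one_le_sq_iff_one_le_abs _ |>.mpr (Int.one_le_abs hy)
      nlinarith
  · have : 1 ≤ x ^ 2 := one_le_sq_iff_one_le_abs _ |>.mpr (Int.one_le_abs hx)
    nlinarith [sq_nonneg (x + y)]

theorem stmt_15 :
    (∀ (A B : Matrix (Fin 2) (Fin 2) ℤ), A.IsSymm → B.IsSymm →
      (∀ v : Fin 2 → ℤ, v ≠ 0 → v ⬝ᵥ A.mulVec v < 0) →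
      (∀ v : Fin 2 → ℤ, v ≠ 0 → v ⬝ᵥ B.mulVec v < 0) →
      (∃ P : Matrix (Fin 2) (Fin 2) ℤ, IsUnit P.det ∧ Pᵀ * A * P = B) →
      (∃ v : Fin 2 → ℤ, v ⬝ᵥ A.mulVec v = -1) →
      ∃ w : Fin 2 → ℤ, w ⬝ᵥ B.mulVec w = -1) ∧
    (∀ m n : ℤ, 1 ≤ m → 2 ≤ n →
      ¬ ∃ P : Matrix (Fin 2) (Fin 2) ℤ, IsUnit P.det ∧
        Pᵀ * !![-2*n - m*n^2, 1; 1, -1] * P =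
          !![-2*n - m*n^2, -1 - m*n; -1 - m*n, -1 - m]) := by
  refine ⟨fun A B _ _ _ _ ⟨P, hP, hPAB⟩ ⟨v, hv⟩ ↦ exists_dotProduct_mulVec_eq_of_congr hP hPAB hv,
    fun m n hm hn ⟨P, hP, hPAB⟩ ↦ ?_⟩
  have h01 : ![0, 1] ⬝ᵥ !![-2*n - m*n^2, 1; 1, -1] *ᵥ ![0, 1] = -1 := by
    rw [dotProduct_mulVec_fin_two]; simp
  obtain ⟨w, hw⟩ := exists_dotProduct_mulVec_eq_of_congr hP hPAB h01
  rw [dotProduct_mulVec_fin_two] at hw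
  exact mul_sq_add_mul_sq_add_sq_ne_one hm (by linarith : (2 : ℤ) ≤ 2 * n - 1) n (w 0) (w 1) (by linarith)
end
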